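/- Let τ, t*, T₃ be real numbers with 1 < τ < 2, 2 < t* < 3, 3 < T₃ < 4 satisfying τ = T₃ − 2·cos(3(τ − 1)/4), t* = 1 + (2/3)·arccos(−2/3) − (τ − 1)/3, and T₃ = t* + sin((3(t* − 1) + (τ − 1))/2) (numerically τ ≈ 1.2319, t* ≈ 2.4564, T₃ ≈ 3.2017). In the priority evacuation model with 3 servants, if trajectories Q, S₁, S₂, S₃ evacuate the queen in time B for some real B < T₃, then the arc measure of the set of points of the unit circle visited by the queen during [0, t*] is strictly greater than τ − 1. -/

import Mathlib

open Real Set MeasureTheory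
open scoped RealInnerProductSpace NNReal ENNReal

noncomputable section

abbrev Plane : Type := EuclideanSpace ℝ (Fin 2)

/-- The point of the unit circle at angle `θ`. -/
def circlePt (θ : ℝ) : Plane := (WithLp.equiv 2 (Fin 2 → ℝ)).symm ![Real.cos θ, Real.sin θ]

/-- A trajectory in the priority evacuation model: a `1`-Lipschitz function on `[0, ∞)`
starting at the origin. -/
def IsTraj (f : ℝ → Plane) : Prop :=
  LipschitzOnWith 1 f (Set.Ici 0) ∧ f 0 = 0

/-- The first-visit time of the point `p` by the queen `Q` or one of the servants `S i`. -/
def visitTime {n : ℕ} (Q : ℝ → Plane) (S : Fin n → ℝ → Plane) (p : Plane) : ℝ :=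
  sInf {t : ℝ | 0 ≤ t ∧ (Q t = p ∨ ∃ i, S i t = p)}

/-- The trajectories `Q` (queen) and `S 0, …, S (n-1)` (servants) evacuate the queen in
time `B`: every point of the unit circle is visited, and the first-visit time plus the
distance from the queen (at that moment) to the point is at most `B`. -/
def Evacuates {n : ℕ} (Q : ℝ → Plane) (S : Fin n → ℝ → Plane) (B : ℝ) : Prop :=
  ∀ p : Plane, ‖p‖ = 1 →
    (∃ t : ℝ, 0 ≤ t ∧ (Q t = p ∨ ∃ i, S i t = p)) ∧
    visitTime Q S p + ‖Q (visitTime Q S p) - p‖ ≤ B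

/-- The set of angles in `[0, 2π)` whose circle point is visited by the queen at some
time in `Tset`; its Lebesgue measure is the arc measure of the queen-explored set. -/
def queenArc (Q : ℝ → Plane) (Tset : Set ℝ) : Set ℝ :=
  {θ : ℝ | θ ∈ Set.Ico 0 (2 * π) ∧ ∃ s ∈ Tset, Q s = circlePt θ}

lemma normsq (x : Plane) : ‖x‖ ^ 2 = x 0 ^ 2 + x 1 ^ 2 := by
  rw [EuclideanSpace.norm_eq, Fin.sum_univ_two, Real.sq_sqrt (by positivity)]
  simp [Real.norm_eq_abs, sq_abs]

lemma circlePt_zero (θ : ℝ) : circlePt θ 0 = Real.cos θ := rfl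
lemma circlePt_one (θ : ℝ) : circlePt θ 1 = Real.sin θ := rfl

lemma sub_apply' (q p : Plane) (i : Fin 2) : (q - p) i = q i - p i := rfl

lemma norm_circlePt (θ : ℝ) : ‖circlePt θ‖ = 1 := by
  have := normsq (circlePt θ)
  rw [circlePt_zero, circlePt_one] at this
  nlinarith [norm_nonneg (circlePt θ), Real.sin_sq_add_cos_sq θ]

lemma norm_sub_circlePt (q : Plane) (θ : ℝ) :
    ‖q - circlePt θ‖ ^ 2 = ‖q‖ ^ 2 + 1 - 2 * (q 0 * Real.cos θ + q 1 * Real.sin θ) := by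
  rw [normsq, normsq, sub_apply', sub_apply', circlePt_zero, circlePt_one]
  nlinarith [Real.sin_sq_add_cos_sq θ]

lemma chord (θ θ' : ℝ) :
    ‖circlePt θ - circlePt θ'‖ = 2 * |Real.sin ((θ - θ') / 2)| := by
  have h := norm_sub_circlePt (circlePt θ) θ'
  rw [circlePt_zero, circlePt_one, norm_circlePt] at h
  have hc : Real.cos θ * Real.cos θ' + Real.sin θ * Real.sin θ' = Real.cos (θ - θ') := (Real.cos_sub θ θ').symm
  have habs := Real.abs_sin_half (θ - θ')
  have : ‖circlePt θ - circlePt θ'‖ ^ 2 = (2 * |Real.sin ((θ - θ') / 2)|) ^ 2 := by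
    rw [h]
    rw [habs]
    rw [mul_pow, Real.sq_sqrt (by nlinarith [Real.cos_le_one (θ - θ'), Real.neg_one_le_cos (θ-θ')])]
    nlinarith
  have h2 : (0:ℝ) ≤ 2 * |Real.sin ((θ - θ') / 2)| := by positivity
  nlinarith [norm_nonneg (circlePt θ - circlePt θ')]

lemma circlePt_injOn : InjOn circlePt (Ico 0 (2 * π)) := by
  intro a ha b hb hab
  have h : ‖circlePt a - circlePt b‖ = 0 := by rw [hab]; simp
  rw [chord] at h
  have h0 : |Real.sin ((a - b) / 2)| = 0 := by linarith
  have : Real.sin ((a - b) / 2) = 0 := abs_eq_zero.mp h0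
  rw [Real.sin_eq_zero_iff] at this
  obtain ⟨n, hn⟩ := this
  have hab2 : a - b = n * (2 * π) := by linarith
  have hpi := Real.pi_pos
  have hn0 : n = 0 := by
    by_contra hne
    rcases lt_or_gt_of_ne hne with h1 | h1
    · have : (n:ℝ) ≤ -1 := by exact_mod_cast Int.le_of_lt_add_one (by simpa using h1)
      have h2 := mul_le_mul_of_nonneg_right this (by positivity : (0:ℝ) ≤ 2*π)
      rw [neg_one_mul] at h2
      linarith [ha.1, hb.2]
    · have : (1:ℝ) ≤ (n:ℝ) := by exact_mod_cast h1
      have h2 := mul_le_mul_of_nonneg_right this (by positivity : (0:ℝ) ≤ 2*π)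
      rw [one_mul] at h2
      linarith [ha.2, hb.1]
  rw [hn0] at hab2; simp at hab2; linarith

lemma circlePt_lipschitz : LipschitzWith 1 circlePt := by
  apply LipschitzWith.of_dist_le_mul
  intro a b
  rw [dist_eq_norm, chord, NNReal.coe_one, one_mul, Real.dist_eq]
  calc 2 * |Real.sin ((a - b) / 2)| ≤ 2 * |(a - b)/2| := by
        have := Real.abs_sin_le_abs (x := (a-b)/2); linarith
    _ = |a - b| := by rw [abs_div]; simp; ring

lemma circlePt_continuous : Continuous circlePt := circlePt_lipschitz.continuous

-- key chord lower bound
lemma chord_lower {δ a b : ℝ} (hδ0 : 0 < δ) (hδ1 : δ ≤ 1) (hab : |a - b| ≤ δ) :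
    |a - b| * (1 - δ^2/16) ≤ ‖circlePt a - circlePt b‖ := by
  rw [chord]
  set u := (a - b) / 2 with hu
  have habs : |a - b| = 2 * |u| := by rw [hu, abs_div]; simp [abs_of_nonneg]; ring
  rw [habs]
  have h1 : |u| * (1 - δ^2/16) ≤ |Real.sin u| := by
    rcases eq_or_ne u 0 with h | h
    · simp [h]
    · have hu1 : 0 < |u| := abs_pos.mpr h
      have hu2 : |u| ≤ δ/2 := by rw [habs] at hab; linarith
      have hs := Real.sin_gt_sub_cube hu1
      have hupi : |u| ≤ π := by nlinarith [Real.pi_gt_three]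
      have hsin : Real.sin |u| = |Real.sin u| := by
        rcases le_or_gt 0 u with h' | h'
        · rw [abs_of_nonneg h',
            abs_of_nonneg (Real.sin_nonneg_of_nonneg_of_le_pi h' (by rwa [abs_of_nonneg h'] at hupi))]
        · have hneg : Real.sin u ≤ 0 := by
            have : (0:ℝ) ≤ Real.sin (-u) := Real.sin_nonneg_of_nonneg_of_le_pi (by linarith)
              (by rwa [abs_of_neg h'] at hupi)
            rw [Real.sin_neg] at this; linarith
          rw [abs_of_neg h', Real.sin_neg, abs_of_nonpos hneg]
      rw [← hsin]
      have h3 : |u|^2 ≤ (δ/2)^2 := by nlinarith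
      nlinarith [mul_le_mul_of_nonneg_left h3 (le_of_lt hu1)]
  nlinarith [abs_nonneg u]

lemma arc_core (f : ℝ → Plane) (hf : LipschitzOnWith 1 f (Ici 0)) (hf0 : f 0 = 0)
    (t : ℝ) (ht : 1 ≤ t) (N : ℕ) (hN0 : 0 < N) (hδ1 : 2 * π / N ≤ 1) :
    volume (queenArc f (Icc 0 t)) ≤
      ENNReal.ofReal ((1 - (2 * π / N)^2/16)⁻¹) * ENNReal.ofReal (t - 1) := by
  set δ : ℝ := 2 * π / N with hδ
  have hπ := Real.pi_pos
  have hδ0 : 0 < δ := by positivity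
  set Kr : ℝ := (1 - δ^2/16)⁻¹ with hKr
  have hden : (0:ℝ) < 1 - δ^2/16 := by nlinarith
  have hKpos : 0 < Kr := by positivity
  set A : Set ℝ := queenArc f (Icc 0 t) with hA
  have hAIco : A ⊆ Ico 0 (2 * π) := fun θ hθ => hθ.1
  -- visits happen at times ≥ 1
  have hvis : ∀ θ ∈ A, circlePt θ ∈ f '' (Icc 1 t) := by
    rintro θ ⟨hθIco, s, hs, hfs⟩
    refine ⟨s, ⟨?_, hs.2⟩, hfs⟩
    have hd := hf.dist_le_mul s (mem_Ici.2 hs.1) 0 (mem_Ici.2 le_rfl)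
    rw [hf0, dist_zero_right, hfs, norm_circlePt] at hd
    simpa [Real.dist_eq, abs_of_nonneg hs.1] using hd
  -- A is measurable
  have hfc : ContinuousOn f (Icc 1 t) :=
    (hf.continuousOn).mono (fun x hx => le_trans (by norm_num) hx.1)
  have hK : IsCompact (f '' (Icc 1 t)) := (isCompact_Icc).image_of_continuousOn hfc
  have hAmeas : MeasurableSet A := by
    have : A = Ico 0 (2 * π) ∩ (circlePt ⁻¹' (f '' (Icc 1 t))) ∩
        (Ico 0 (2*π) ∩ circlePt ⁻¹' (f '' (Icc 0 t))) := by
      ext θ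
      constructor
      · intro hθ
        exact ⟨⟨hθ.1, hvis θ hθ⟩, hθ.1, by
          obtain ⟨s, hs, hfs⟩ := hθ.2; exact ⟨s, hs, hfs⟩⟩
      · rintro ⟨-, hIco, hpre⟩
        obtain ⟨s, hs, hfs⟩ := hpre
        exact ⟨hIco, s, hs, hfs⟩
    rw [this]
    have hK2 : IsCompact (f '' (Icc 0 t)) := (isCompact_Icc).image_of_continuousOn
      ((hf.continuousOn).mono (fun x hx => hx.1))
    exact ((measurableSet_Ico.inter (hK.isClosed.measurableSet.preimage circlePt_continuous.measurable))).inter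
      (measurableSet_Ico.inter (hK2.isClosed.measurableSet.preimage circlePt_continuous.measurable))
  -- the pieces
  set I : ℕ → Set ℝ := fun k => Ico (k * δ) ((k+1) * δ) with hI
  have hcover : A ⊆ ⋃ k ∈ Finset.range N, A ∩ I k := by
    intro θ hθ
    obtain ⟨⟨hθ0, hθ2⟩, hEx⟩ := hθ
    have hk0 : (0:ℝ) ≤ θ / δ := by positivity
    set k : ℕ := ⌊θ / δ⌋₊ with hk
    have h1 : (k:ℝ) ≤ θ / δ := Nat.floor_le hk0
    have h2 : θ / δ < k + 1 := Nat.lt_floor_add_one _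
    have hkN : k < N := by
      have : θ / δ < N := by
        rw [div_lt_iff₀ hδ0]
        calc θ < 2 * π := hθ2
          _ = N * δ := by rw [hδ]; field_simp [Nat.cast_ne_zero.2 hN0.ne']
      exact_mod_cast Nat.floor_lt hk0 |>.2 this
    refine mem_biUnion (Finset.mem_range.2 hkN) ⟨⟨⟨hθ0, hθ2⟩, hEx⟩, ?_, ?_⟩
    · calc (k:ℝ) * δ ≤ (θ/δ) * δ := by nlinarith
        _ = θ := by field_simp
    · calc θ = (θ/δ) * δ := by field_simp
        _ < (k+1) * δ := by nlinarith
  -- per piece bound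
  have hpiece : ∀ k : ℕ, volume (A ∩ I k) ≤
      ENNReal.ofReal Kr * μH[1] (circlePt '' (A ∩ I k)) := by
    intro k
    set s : Set ℝ := A ∩ I k with hs
    set g : Plane → ℝ := Function.invFunOn circlePt s with hg
    have hinj : InjOn circlePt s := circlePt_injOn.mono (fun θ hθ => hAIco hθ.1)
    have hginv : ∀ θ ∈ s, g (circlePt θ) = θ := fun θ hθ =>
      hinj (Function.invFunOn_mem ⟨θ, hθ, rfl⟩) hθ (Function.invFunOn_eq ⟨θ, hθ, rfl⟩)
    have himg : g '' (circlePt '' s) = s := by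
      rw [Set.image_image, Set.image_congr hginv]; simp
    have hlip : LipschitzOnWith (Real.toNNReal Kr) g (circlePt '' s) := by
      apply LipschitzOnWith.of_dist_le_mul
      rintro p ⟨a, ha, rfl⟩ q ⟨b, hb, rfl⟩
      rw [hginv a ha, hginv b hb, Real.dist_eq, dist_eq_norm]
      have hab : |a - b| ≤ δ := by
        rw [abs_le]
        have h1 := ha.2.1; have h2 := ha.2.2; have h3 := hb.2.1; have h4 := hb.2.2
        constructor <;> nlinarith
      rw [Real.coe_toNNReal _ hKpos.le]
      have hone : Kr * (1 - δ^2/16) = 1 := inv_mul_cancel₀ hden.ne'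
      calc |a - b| = Kr * (|a - b| * (1 - δ^2/16)) := by
            rw [mul_comm (|a-b|) (1 - δ^2/16), ← mul_assoc, hone, one_mul]
        _ ≤ Kr * ‖circlePt a - circlePt b‖ :=
            mul_le_mul_of_nonneg_left (chord_lower hδ0 hδ1 hab) hKpos.le
    have hbound := hlip.hausdorffMeasure_image_le (le_of_lt one_pos : (0:ℝ) ≤ 1)
    rw [himg] at hbound
    rw [← MeasureTheory.hausdorffMeasure_real]
    refine le_trans hbound ?_
    rw [ENNReal.rpow_one]
    exact le_of_eq rfl
  have hVmeas : ∀ k : ℕ, MeasurableSet (circlePt '' (A ∩ I k)) := fun k =>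
    (hAmeas.inter measurableSet_Ico).image_of_continuousOn_injOn
      circlePt_continuous.continuousOn (circlePt_injOn.mono (fun θ hθ => hAIco hθ.1))
  have hdisj : Set.PairwiseDisjoint (↑(Finset.range N)) (fun k => circlePt '' (A ∩ I k)) := by
    intro i _ j _ hij
    apply Set.disjoint_left.2
    rintro p ⟨a, ha, rfl⟩ ⟨b, hb, hba⟩
    have hba' : b = a := circlePt_injOn (hAIco hb.1) (hAIco ha.1) hba
    subst hba'
    have ha1 := ha.2.1; have ha2 := ha.2.2; have hb1 := hb.2.1; have hb2 := hb.2.2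
    rcases Nat.lt_or_ge i j with h | h
    · have h' : (i:ℝ) + 1 ≤ j := by exact_mod_cast h
      nlinarith [mul_le_mul_of_nonneg_right h' hδ0.le]
    · have h'' : j < i := lt_of_le_of_ne h (Ne.symm hij)
      have h' : (j:ℝ) + 1 ≤ i := by exact_mod_cast h''
      nlinarith [mul_le_mul_of_nonneg_right h' hδ0.le]
  calc volume A ≤ ∑ k ∈ Finset.range N, volume (A ∩ I k) :=
        (measure_mono hcover).trans (measure_biUnion_finset_le _ _)
    _ ≤ ∑ k ∈ Finset.range N, ENNReal.ofReal Kr * μH[1] (circlePt '' (A ∩ I k)) :=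
        Finset.sum_le_sum (fun k _ => hpiece k)
    _ = ENNReal.ofReal Kr * ∑ k ∈ Finset.range N, μH[1] (circlePt '' (A ∩ I k)) := by
        rw [Finset.mul_sum]
    _ = ENNReal.ofReal Kr * μH[1] (⋃ k ∈ Finset.range N, circlePt '' (A ∩ I k)) := by
        rw [measure_biUnion_finset hdisj (fun k _ => hVmeas k)]
    _ ≤ ENNReal.ofReal Kr * μH[1] (f '' Icc 1 t) := by
        gcongr
        refine iUnion₂_subset fun k _ => ?_
        rintro p ⟨a, ha, rfl⟩
        exact hvis a ha.1
    _ ≤ ENNReal.ofReal Kr * (((1:ℝ≥0):ℝ≥0∞) ^ (1:ℝ) * μH[1] (Icc (1:ℝ) t)) := by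
        gcongr
        exact (hf.mono (fun x hx => le_trans (by norm_num) hx.1)).hausdorffMeasure_image_le
          (by norm_num)
    _ = ENNReal.ofReal Kr * ENNReal.ofReal (t - 1) := by
        rw [MeasureTheory.hausdorffMeasure_real, Real.volume_Icc]
        simp

lemma arc_measure_le (f : ℝ → Plane) (hf : LipschitzOnWith 1 f (Ici 0)) (hf0 : f 0 = 0)
    (t : ℝ) (ht : 1 ≤ t) :
    volume (queenArc f (Icc 0 t)) ≤ ENNReal.ofReal (t - 1) := by
  have hπ := Real.pi_pos
  refine ENNReal.le_of_forall_pos_le_add fun ε hε hfin => ?_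
  have hε0 : (0:ℝ) < ε := hε
  obtain ⟨N, hN⟩ := exists_nat_gt (max (2 * π) (2 * π * (t - 1) / ε))
  have hN1 : 2 * π < N := lt_of_le_of_lt (le_max_left _ _) hN
  have hN2 : 2 * π * (t - 1) / ε < N := lt_of_le_of_lt (le_max_right _ _) hN
  have hN0 : 0 < N := by
    by_contra h
    push_neg at h
    interval_cases N
    · simp at hN1; linarith
  have hNR : (0:ℝ) < N := by exact_mod_cast hN0
  set δ : ℝ := 2 * π / N with hδ
  have hδ0 : 0 < δ := by positivity
  have hδ1 : δ ≤ 1 := by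
    rw [hδ, div_le_one hNR]; linarith
  have hδε : δ * (t - 1) ≤ ε := by
    rw [div_lt_iff₀ hε0] at hN2
    rw [hδ, div_mul_eq_mul_div, div_le_iff₀ hNR]
    nlinarith
  have hcore := arc_core f hf hf0 t ht N hN0 hδ1
  have hden : (0:ℝ) < 1 - δ^2/16 := by nlinarith
  have hreal : (1 - δ^2/16)⁻¹ * (t - 1) ≤ (t - 1) + ε := by
    rw [inv_mul_le_iff₀ hden]
    nlinarith [sq_nonneg δ, mul_le_mul_of_nonneg_left hδ1 hδ0.le]
  refine le_trans hcore ?_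
  calc ENNReal.ofReal (1 - δ^2/16)⁻¹ * ENNReal.ofReal (t - 1)
      = ENNReal.ofReal ((1 - δ^2/16)⁻¹ * (t - 1)) := (ENNReal.ofReal_mul (by positivity)).symm
    _ ≤ ENNReal.ofReal ((t - 1) + ε) := ENNReal.ofReal_le_ofReal hreal
    _ = ENNReal.ofReal (t - 1) + ε := by
        rw [ENNReal.ofReal_add (by linarith) ε.coe_nonneg, ENNReal.ofReal_coe_nnreal]

lemma per_shift (c : ℝ) (a : ℝ) :
    volume ({θ : ℝ | c ≤ Real.cos θ} ∩ Ico a (a + 2*π)) =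
    volume ({θ : ℝ | c ≤ Real.cos θ} ∩ Ico 0 (2*π)) := by
  have hπ := Real.pi_pos
  set P : Set ℝ := {θ : ℝ | c ≤ Real.cos θ} with hP
  have hPmeas : MeasurableSet P := measurableSet_le measurable_const Real.continuous_cos.measurable
  have hper : ∀ (x : ℝ) (n : ℤ), (x + n * (2*π) ∈ P ↔ x ∈ P) := by
    intro x n
    simp only [hP, mem_setOf_eq, Real.cos_add_int_mul_two_pi]
  set m : ℤ := ⌈a / (2*π)⌉ with hm
  set b : ℝ := 2*π * m with hb
  have hab : a ≤ b := by
    have h1 := Int.le_ceil (a / (2*π))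
    rw [hb]
    calc a = (a / (2*π)) * (2*π) := by field_simp
      _ ≤ (m:ℝ) * (2*π) := by nlinarith
      _ = 2*π*m := by ring
  have hba : b < a + 2*π := by
    have h2 : (m:ℝ) < a/(2*π) + 1 := by exact_mod_cast Int.ceil_lt_add_one (a / (2*π))
    rw [hb]
    have h3 : 2*π * (a/(2*π) + 1) = a + 2*π := by field_simp
    nlinarith [mul_lt_mul_of_pos_left h2 (by linarith : (0:ℝ) < 2*π), h3]
  set u : ℝ := a - b + 2*π with hu
  have hu0 : 0 < u := by rw [hu]; linarith
  have hu2 : u ≤ 2*π := by rw [hu]; linarith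
  have hsplit : Ico a (a + 2*π) = Ico a b ∪ Ico b (a + 2*π) :=
    (Ico_union_Ico_eq_Ico hab hba.le).symm
  have h1 : volume (P ∩ Ico a (a + 2*π)) = volume (P ∩ Ico a b) + volume (P ∩ Ico b (a + 2*π)) := by
    rw [hsplit, Set.inter_union_distrib_left]
    refine measure_union ?_ (hPmeas.inter measurableSet_Ico)
    apply Set.disjoint_left.2
    rintro x ⟨-, h1⟩ ⟨-, h2⟩
    exact absurd h2.1 (not_le.2 h1.2)
  have hsh1 : volume (P ∩ Ico u (2*π)) = volume (P ∩ Ico a b) := by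
    rw [← measure_preimage_add_right volume (b - 2*π) (P ∩ Ico a b)]
    congr 1
    ext x
    simp only [mem_preimage, mem_inter_iff, mem_Ico, mem_setOf_eq, hP]
    have hx : x + (b - 2*π) = x + (m - 1 : ℤ) * (2*π) := by
      push_cast; rw [hb]; ring
    rw [show c ≤ Real.cos (x + (b - 2*π)) ↔ (x + (b-2*π)) ∈ P from Iff.rfl, hx,
      hper x (m-1), hu]
    constructor
    · rintro ⟨hp, h1, h2⟩; exact ⟨hp, by linarith, by linarith⟩
    · rintro ⟨hp, h1, h2⟩; exact ⟨hp, by linarith, by linarith⟩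
  have hsh2 : volume (P ∩ Ico 0 u) = volume (P ∩ Ico b (a + 2*π)) := by
    rw [← measure_preimage_add_right volume b (P ∩ Ico b (a + 2*π))]
    congr 1
    ext x
    simp only [mem_preimage, mem_inter_iff, mem_Ico, mem_setOf_eq, hP]
    have hx : x + b = x + (m : ℤ) * (2*π) := by push_cast; rw [hb]; ring
    rw [show c ≤ Real.cos (x + b) ↔ (x + b) ∈ P from Iff.rfl, hx, hper x m, hu]
    constructor
    · rintro ⟨hp, h1, h2⟩; exact ⟨hp, by linarith, by linarith⟩
    · rintro ⟨hp, h1, h2⟩; exact ⟨hp, by linarith, by linarith⟩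
  have h2 : volume (P ∩ Ico 0 (2*π)) = volume (P ∩ Ico 0 u) + volume (P ∩ Ico u (2*π)) := by
    rw [show Ico (0:ℝ) (2*π) = Ico 0 u ∪ Ico u (2*π) from (Ico_union_Ico_eq_Ico hu0.le hu2).symm,
      Set.inter_union_distrib_left]
    refine measure_union ?_ (hPmeas.inter measurableSet_Ico)
    apply Set.disjoint_left.2
    rintro x ⟨-, h1⟩ ⟨-, h2⟩
    exact absurd h2.1 (not_le.2 h1.2)
  rw [h1, h2, hsh1, hsh2, add_comm]

lemma arccos_le_arccos' {x y : ℝ} (h : x ≤ y) : Real.arccos y ≤ Real.arccos x := by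
  unfold Real.arccos
  have := Real.monotone_arcsin h
  linarith

lemma cos_set_measure (c φ : ℝ) :
    volume {θ : ℝ | θ ∈ Ico 0 (2*π) ∧ c ≤ Real.cos (θ - φ)} ≤
      ENNReal.ofReal (2 * Real.arccos c) := by
  have hπ := Real.pi_pos
  have hshift : volume {θ : ℝ | θ ∈ Ico 0 (2*π) ∧ c ≤ Real.cos (θ - φ)} =
      volume ({θ : ℝ | c ≤ Real.cos θ} ∩ Ico (-φ) (-φ + 2*π)) := by
    rw [← measure_preimage_add_right volume (-φ) ({θ : ℝ | c ≤ Real.cos θ} ∩ Ico (-φ) (-φ + 2*π))]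
    congr 1
    ext x
    simp only [mem_preimage, mem_inter_iff, mem_Ico, mem_setOf_eq]
    rw [show x + -φ = x - φ by ring]
    constructor
    · rintro ⟨⟨h1, h2⟩, h3⟩
      exact ⟨h3, by linarith, by linarith⟩
    · rintro ⟨h1, h2, h3⟩
      exact ⟨⟨by linarith, by linarith⟩, h1⟩
  rw [hshift, per_shift]
  -- now bound the standard set
  have hsub : {θ : ℝ | c ≤ Real.cos θ} ∩ Ico 0 (2*π) ⊆
      Icc 0 (Real.arccos c) ∪ Icc (2*π - Real.arccos c) (2*π) := by
    rintro θ ⟨hc, h0, h2⟩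
    rw [mem_setOf_eq] at hc
    rcases le_or_gt θ π with h | h
    · left
      refine ⟨h0, ?_⟩
      have := arccos_le_arccos' hc
      rwa [Real.arccos_cos h0 h] at this
    · right
      refine ⟨?_, h2.le⟩
      have hc2 : c ≤ Real.cos (2*π - θ) := by
        rwa [Real.cos_two_pi_sub]
      have := arccos_le_arccos' hc2
      rw [Real.arccos_cos (by linarith) (by linarith)] at this
      linarith
  calc volume ({θ : ℝ | c ≤ Real.cos θ} ∩ Ico 0 (2*π))
      ≤ volume (Icc (0:ℝ) (Real.arccos c) ∪ Icc (2*π - Real.arccos c) (2*π)) := measure_mono hsub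
    _ ≤ volume (Icc (0:ℝ) (Real.arccos c)) + volume (Icc (2*π - Real.arccos c) (2*π)) :=
        measure_union_le _ _
    _ ≤ ENNReal.ofReal (2 * Real.arccos c) := by
        rw [Real.volume_Icc, Real.volume_Icc, ← ENNReal.ofReal_add (by simp [Real.arccos_nonneg])
          (by simp [Real.arccos_nonneg])]
        apply ENNReal.ofReal_le_ofReal
        rw [sub_zero]
        have h1 : 2*π - (2*π - Real.arccos c) = Real.arccos c := by ring
        rw [h1]
        linarith

set_option maxHeartbeats 2000000 in
lemma near_set_measure (q : Plane) (r : ℝ) (hr : r < Real.sqrt 5 / 3) :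
    volume {θ : ℝ | θ ∈ Ico 0 (2*π) ∧ ‖q - circlePt θ‖ ≤ r} <
      ENNReal.ofReal (2 * Real.arccos (2/3)) := by
  have hπ := Real.pi_pos
  have harcpos : 0 < Real.arccos (2/3) := Real.arccos_pos.2 (by norm_num)
  have hRHS : (0:ℝ≥0∞) < ENNReal.ofReal (2 * Real.arccos (2/3)) := ENNReal.ofReal_pos.2 (by linarith)
  have hs59 : (Real.sqrt 5 / 3)^2 = 5/9 := by
    rw [div_pow, Real.sq_sqrt (by norm_num : (0:ℝ) ≤ 5)]; norm_num
  have hsqrt5 : Real.sqrt 5 / 3 < 1 := by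
    nlinarith [Real.sqrt_nonneg 5]
  rcases lt_or_ge r 0 with hr0 | hr0
  · have hempty : {θ : ℝ | θ ∈ Ico 0 (2*π) ∧ ‖q - circlePt θ‖ ≤ r} = ∅ := by
      ext θ
      simp only [mem_setOf_eq, mem_empty_iff_false, iff_false, not_and]
      intro _ h
      linarith [norm_nonneg (q - circlePt θ)]
    rw [hempty, measure_empty]
    exact hRHS
  rcases eq_or_ne q 0 with hq | hq
  · have hempty : {θ : ℝ | θ ∈ Ico 0 (2*π) ∧ ‖q - circlePt θ‖ ≤ r} = ∅ := by
      ext θ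
      simp only [mem_setOf_eq, mem_empty_iff_false, iff_false, not_and]
      intro _
      rw [hq, zero_sub, norm_neg]
      have h1 : ‖circlePt θ‖^2 = 1 := by
        rw [normsq]
        show Real.cos θ ^ 2 + Real.sin θ ^2 = 1
        exact Real.cos_sq_add_sin_sq θ
      have h2 : ‖circlePt θ‖ = 1 := by nlinarith [norm_nonneg (circlePt θ)]
      rw [h2]; intro h3; linarith
    rw [hempty, measure_empty]
    exact hRHS
  · set d : ℝ := ‖q‖ with hdd
    have hd : 0 < d := norm_pos_iff.2 hq
    set a : ℝ := q 0 with ha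
    set b : ℝ := q 1 with hb
    have hab : a^2 + b^2 = d^2 := (normsq q).symm
    have habs_a : |a| ≤ d := by
      rw [← Real.sqrt_sq_eq_abs, ← Real.sqrt_sq hd.le]
      apply Real.sqrt_le_sqrt
      nlinarith [sq_nonneg b]
    have hda : -1 ≤ a/d := by rw [le_div_iff₀ hd]; cases abs_cases a <;> linarith
    have hda' : a/d ≤ 1 := by rw [div_le_one hd]; cases abs_cases a <;> linarith
    set φ : ℝ := if 0 ≤ b then Real.arccos (a/d) else -Real.arccos (a/d) with hφ
    have hcosφ : Real.cos φ = a / d := by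
      rw [hφ]
      split_ifs
      · exact Real.cos_arccos hda hda'
      · rw [Real.cos_neg]; exact Real.cos_arccos hda hda'
    have hbd : 1 - (a/d)^2 = (b/d)^2 := by field_simp; nlinarith
    have hsinφ : Real.sin φ = b / d := by
      rw [hφ]
      split_ifs with hb0
      · rw [Real.sin_arccos, hbd, Real.sqrt_sq (by positivity)]
      · push_neg at hb0
        rw [Real.sin_neg, Real.sin_arccos, hbd, Real.sqrt_sq_eq_abs,
          abs_of_neg (div_neg_of_neg_of_pos hb0 hd), neg_neg]
    set c : ℝ := (d^2 + 1 - r^2)/(2*d) with hc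
    have hsubset : {θ : ℝ | θ ∈ Ico 0 (2*π) ∧ ‖q - circlePt θ‖ ≤ r} ⊆
        {θ : ℝ | θ ∈ Ico 0 (2*π) ∧ c ≤ Real.cos (θ - φ)} := by
      rintro θ ⟨hIco, hle⟩
      refine ⟨hIco, ?_⟩
      have h2 := norm_sub_circlePt q θ
      rw [← ha, ← hb, ← hdd] at h2
      have h3 : ‖q - circlePt θ‖^2 ≤ r^2 := by nlinarith [norm_nonneg (q - circlePt θ)]
      rw [h2] at h3
      have h4 : a * Real.cos θ + b * Real.sin θ = d * Real.cos (θ - φ) := by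
        rw [Real.cos_sub, hcosφ, hsinφ]
        field_simp
      rw [h4] at h3
      rw [hc, div_le_iff₀ (by linarith : (0:ℝ) < 2*d)]
      nlinarith [h3]
    have hcgt : 2/3 < c := by
      rw [hc, lt_div_iff₀ (by linarith)]
      have hr2 : r^2 < 5/9 := by nlinarith
      nlinarith [sq_nonneg (d - 2/3)]
    calc volume {θ : ℝ | θ ∈ Ico 0 (2*π) ∧ ‖q - circlePt θ‖ ≤ r}
        ≤ volume {θ : ℝ | θ ∈ Ico 0 (2*π) ∧ c ≤ Real.cos (θ - φ)} := measure_mono hsubset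
      _ ≤ ENNReal.ofReal (2 * Real.arccos c) := cos_set_measure c φ
      _ < ENNReal.ofReal (2 * Real.arccos (2/3)) := by
          rw [ENNReal.ofReal_lt_ofReal_iff (by linarith)]
          rcases le_or_gt c 1 with hc1 | hc1
          · have := Real.strictAntiOn_arccos
              (by constructor <;> norm_num : (2/3:ℝ) ∈ Icc (-1:ℝ) 1)
              (⟨by linarith, hc1⟩ : c ∈ Icc (-1:ℝ) 1) hcgt
            linarith
          · rw [Real.arccos_eq_zero.2 hc1.le]
            linarith


set_option maxHeartbeats 1000000 in
/-- with three servants and evacuation time `B < T₃`, the queen must have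
explored arc measure strictly more than `τ - 1` before the time `t*`, where
`τ, t*, T₃` solve the stated system. -/
theorem queen_exploration_lower_bound_three_servants
    (τ tstar T₃ : ℝ)
    (hτ : 1 < τ) (hτ' : τ < 2) (hts : 2 < tstar) (hts' : tstar < 3)
    (hT : 3 < T₃) (hT' : T₃ < 4)
    (e1 : τ = T₃ - 2 * Real.cos (3 * (τ - 1) / 4))
    (e2 : tstar = 1 + (2 / 3) * Real.arccos (-2 / 3) - (τ - 1) / 3)
    (e3 : T₃ = tstar + Real.sin ((3 * (tstar - 1) + (τ - 1)) / 2))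
    (Q : ℝ → Plane) (S : Fin 3 → ℝ → Plane)
    (hQ : IsTraj Q) (hS : ∀ i, IsTraj (S i))
    (B : ℝ) (hB : B < T₃) (hEv : Evacuates Q S B) :
    ENNReal.ofReal (τ - 1) < volume (queenArc Q (Set.Icc 0 tstar)) := by
  classical
  have hπ := Real.pi_pos
  by_contra hcon
  push_neg at hcon
  set β : ℝ := Real.arccos (-2/3) with hβ
  have hβeq : 3 * (tstar - 1) + (τ - 1) = 2 * β := by
    rw [hβ]
    have : Real.arccos (-2/3) = Real.arccos (-2 / 3) := by norm_num
    rw [this]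
    linarith [e2]
  have harcpos : 0 < Real.arccos (2/3) := Real.arccos_pos.2 (by norm_num)
  have harcneg : β = π - Real.arccos (2/3) := by
    rw [hβ, show (-2/3 : ℝ) = -(2/3) by norm_num, Real.arccos_neg]
  have hsinβ : Real.sin β = Real.sqrt 5 / 3 := by
    rw [hβ, Real.sin_arccos, show (1 : ℝ) - (-2/3)^2 = 5/9 by norm_num,
      show (5/9 : ℝ) = (Real.sqrt 5/3)^2 by
        rw [div_pow, Real.sq_sqrt (by norm_num : (0:ℝ) ≤ 5)]; norm_num]
    exact Real.sqrt_sq (by positivity)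
  have hT3 : T₃ - tstar = Real.sqrt 5 / 3 := by
    have h' : Real.sin ((3*(tstar-1)+(τ-1))/2) = Real.sqrt 5/3 := by
      rw [show (3*(tstar-1)+(τ-1))/2 = β by linarith, hsinβ]
    have := e3
    rw [show (3 * (tstar - 1) + (τ - 1)) / 2 = (3*(tstar-1)+(τ-1))/2 by ring] at this
    rw [h'] at this
    linarith
  set r : ℝ := B - tstar with hr
  have hrlt : r < Real.sqrt 5 / 3 := by rw [hr]; linarith
  have hst1 : (1:ℝ) ≤ tstar := by linarith
  have hSle : ∀ i : Fin 3, volume (queenArc (S i) (Icc 0 tstar)) ≤ ENNReal.ofReal (tstar - 1) :=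
    fun i => arc_measure_le (S i) (hS i).1 (hS i).2 tstar hst1
  set U : Set ℝ := queenArc Q (Icc 0 tstar) ∪ ⋃ i : Fin 3, queenArc (S i) (Icc 0 tstar) with hU
  set W : Set ℝ := Ico 0 (2*π) \ U with hW
  have hWD : W ⊆ {θ : ℝ | θ ∈ Ico 0 (2*π) ∧ ‖Q tstar - circlePt θ‖ ≤ r} := by
    rintro θ ⟨hIco, hnot⟩
    refine ⟨hIco, ?_⟩
    obtain ⟨⟨t0, ht0, hvisit0⟩, hineq⟩ := hEv (circlePt θ) (norm_circlePt θ)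
    set vt := visitTime Q S (circlePt θ) with hvt
    have hvt_ge : tstar ≤ vt := by
      refine le_csInf ⟨t0, ht0, hvisit0⟩ ?_
      rintro x ⟨hx0, hxvis⟩
      by_contra hlt
      push_neg at hlt
      apply hnot
      rcases hxvis with h | ⟨i, h⟩
      · exact Or.inl ⟨hIco, x, ⟨hx0, hlt.le⟩, h⟩
      · exact Or.inr (mem_iUnion.2 ⟨i, ⟨hIco, x, ⟨hx0, hlt.le⟩, h⟩⟩)
    have hvt0 : (0:ℝ) ≤ vt := by linarith
    have hlip : dist (Q vt) (Q tstar) ≤ 1 * dist vt tstar :=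
      hQ.1.dist_le_mul vt (mem_Ici.2 hvt0) tstar (mem_Ici.2 (by linarith))
    have hd1 : dist vt tstar = vt - tstar := by
      rw [Real.dist_eq, abs_of_nonneg (by linarith)]
    have htri : dist (Q tstar) (circlePt θ) ≤ dist (Q tstar) (Q vt) + dist (Q vt) (circlePt θ) :=
      dist_triangle _ _ _
    rw [dist_eq_norm] at htri
    rw [dist_eq_norm] at htri
    rw [dist_eq_norm] at htri
    have hsym : dist (Q vt) (Q tstar) = ‖Q tstar - Q vt‖ := by
      rw [dist_comm, dist_eq_norm]
    rw [hsym, hd1] at hlip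
    rw [hr]
    linarith [hineq, htri, hlip]
  have hWlt : volume W < ENNReal.ofReal (2 * Real.arccos (2/3)) :=
    lt_of_le_of_lt (measure_mono hWD) (near_set_measure (Q tstar) r hrlt)
  have hsum : ENNReal.ofReal (2*π) ≤ volume W + volume U := by
    calc ENNReal.ofReal (2*π) = volume (Ico (0:ℝ) (2*π)) := by
          rw [Real.volume_Ico, sub_zero]
      _ ≤ volume (W ∪ U) := measure_mono (fun x hx => by
          by_cases h : x ∈ U
          · exact Or.inr h
          · exact Or.inl ⟨hx, h⟩)
      _ ≤ volume W + volume U := measure_union_le _ _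
  have hUle : volume U ≤ ENNReal.ofReal (τ - 1) + 3 * ENNReal.ofReal (tstar - 1) := by
    calc volume U ≤ volume (queenArc Q (Icc 0 tstar)) +
        volume (⋃ i : Fin 3, queenArc (S i) (Icc 0 tstar)) := measure_union_le _ _
      _ ≤ ENNReal.ofReal (τ - 1) + ∑' i : Fin 3, volume (queenArc (S i) (Icc 0 tstar)) :=
          add_le_add hcon (measure_iUnion_le _)
      _ ≤ ENNReal.ofReal (τ - 1) + ∑' _i : Fin 3, ENNReal.ofReal (tstar - 1) :=
          add_le_add (le_refl _) (ENNReal.tsum_le_tsum (fun i => hSle i))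
      _ = ENNReal.ofReal (τ - 1) + 3 * ENNReal.ofReal (tstar - 1) := by
          rw [tsum_fintype, Finset.sum_const, Finset.card_univ, Fintype.card_fin]
          simp [nsmul_eq_mul]
  have hfin : ENNReal.ofReal (τ - 1) + 3 * ENNReal.ofReal (tstar - 1) ≠ ⊤ :=
    ENNReal.add_ne_top.2 ⟨ENNReal.ofReal_ne_top,
      ENNReal.mul_ne_top (by simp) ENNReal.ofReal_ne_top⟩
  have hcomb : ENNReal.ofReal (2*π) <
      ENNReal.ofReal (2 * Real.arccos (2/3)) +
        (ENNReal.ofReal (τ - 1) + 3 * ENNReal.ofReal (tstar - 1)) := by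
    refine lt_of_le_of_lt (hsum.trans (add_le_add (le_refl _) hUle)) ?_
    exact ENNReal.add_lt_add_right hfin hWlt
  have hrhs : ENNReal.ofReal (2 * Real.arccos (2/3)) +
      (ENNReal.ofReal (τ - 1) + 3 * ENNReal.ofReal (tstar - 1)) = ENNReal.ofReal (2*π) := by
    have h3 : (3 : ℝ≥0∞) * ENNReal.ofReal (tstar - 1) = ENNReal.ofReal (3 * (tstar - 1)) := by
      rw [ENNReal.ofReal_mul (by norm_num : (0:ℝ) ≤ 3)]
      norm_num
    rw [h3, ← ENNReal.ofReal_add (by linarith) (by linarith),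
      ← ENNReal.ofReal_add (by positivity) (by nlinarith)]
    congr 1
    have : Real.arccos (2/3) = π - β := by rw [harcneg]; ring
    rw [this]
    linarith
  rw [hrhs] at hcomb
  exact lt_irrefl _ hcomb
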